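/- arXiv:2107.12720 — 3 statements merged into one kernel-verified Lean document; each statement's English description precedes it below -/
import Mathlib

section
/- Let G = (V, E) be a finite directed graph with peeling sequence D₀ = ∅, D_{k+1} = F(D_k), number of peeling steps α, and maximum trimmed set V*. Then D_α is the least fixed point of F: D_α = F(D_α), and D_α ⊆ D for every D ⊆ V with F(D) ⊆ D. Moreover V \ D_α = V*; equivalently, the status assignment whose DEAD set is D_α is sound and complete, and its DEAD set is contained in the DEAD set of every sound and complete status assignment. -/
/-- A subset `S` of the vertices satisfies the trimmed-graph condition if every
vertex of `S` has at least one successor within `S`. -/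
def Trimmed {V : Type*} (E : V → V → Prop) (S : Set V) : Prop :=
  ∀ v ∈ S, ∃ w ∈ S, E v w

/-- `D_α` is the least fixed point of the peeling operator `F`, its
complement is the maximum trimmed set `V*`; equivalently the status assignment with
DEAD set `D_α` is sound and complete, and `D_α` is contained in the DEAD set of
every sound and complete status assignment. -/
theorem peeling_least_fixed_point {V : Type*} [Fintype V] (E : V → V → Prop)
    (D : ℕ → Set V) (hD0 : D 0 = ∅)
    (hDs : ∀ k, D (k + 1) = {v | {w | E v w} ⊆ D k})
    (α : ℕ) (hα : D (α + 1) = D α) (hαleast : ∀ k, D (k + 1) = D k → α ≤ k)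
    (Vstar : Set V)
    (hVstar : Trimmed E Vstar ∧ ∀ S, Trimmed E S → S ⊆ Vstar) :
    D α = {v | {w | E v w} ⊆ D α} ∧
    (∀ S : Set V, {v | {w | E v w} ⊆ S} ⊆ S → D α ⊆ S) ∧
    (D α)ᶜ = Vstar ∧
    (∀ v ∈ D α, {w | E v w} ⊆ D α) ∧
    (∀ v : V, {w | E v w} ⊆ D α → v ∈ D α) ∧
    (∀ D' : Set V, (∀ v ∈ D', {w | E v w} ⊆ D') →
      (∀ v : V, {w | E v w} ⊆ D' → v ∈ D') → D α ⊆ D') := by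
  have hfix : D α = {v | {w | E v w} ⊆ D α} := by
    conv_rhs => rw [← hDs α]
    exact hα.symm
  have hleast : ∀ S : Set V, {v | {w | E v w} ⊆ S} ⊆ S → D α ⊆ S := by
    intro S hS
    have : ∀ k, D k ⊆ S := by
      intro k; induction k with
      | zero => rw [hD0]; exact Set.empty_subset _
      | succ n ih =>
        rw [hDs n]
        exact fun v hv => hS (fun w hw => ih (hv hw))
    exact this α
  have hsound : ∀ v ∈ D α, {w | E v w} ⊆ D α := by
    intro v hv
    rw [← hα, hDs α] at hv; exact hv
  have hcomp : ∀ v : V, {w | E v w} ⊆ D α → v ∈ D α := by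
    intro v hv
    rw [← hα, hDs α]; exact hv
  refine ⟨hfix, hleast, ?_, hsound, hcomp, ?_⟩
  · apply Set.Subset.antisymm
    · exact hVstar.2 _ (fun v hv => by
        by_contra h
        push_neg at h
        exact hv (hcomp v (fun w hw => by
          by_contra hw'
          exact h w hw' hw)))
    · intro v hv hvD
      have := hleast Vstarᶜ (fun u hu huV => by
        obtain ⟨w, hwV, hew⟩ := hVstar.1 u huV
        exact hu hew hwV)
      exact this hvD hv
  · intro D' hs hc
    exact hleast D' (fun v hv => hc v hv)
end

section
/- Let G = (V, E) be a finite directed graph and let V* be the maximum subset of V satisfying the trimmed-graph condition. Then for every vertex v ∈ V: v ∈ V* if and only if there is a directed walk in G from v to some vertex w that lies on a cycle of G (the walk from v to w may have length 0). -/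
/-- A vertex `v` belongs to the maximum trimmed set `V*` iff there is
a directed walk (possibly of length 0) from `v` to some vertex `w` that lies on a
cycle of `G`. -/
theorem mem_trimmed_iff_reaches_cycle {V : Type*} [Fintype V] (E : V → V → Prop)
    (Vstar : Set V)
    (hVstar : Trimmed E Vstar ∧ ∀ S, Trimmed E S → S ⊆ Vstar) :
    ∀ v : V, v ∈ Vstar ↔
      ∃ (j : ℕ) (f : ℕ → V), f 0 = v ∧ (∀ i < j, E (f i) (f (i + 1))) ∧
        ∃ (k : ℕ) (g : ℕ → V), 0 < k ∧ g 0 = g k ∧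
          (∀ i < k, E (g i) (g (i + 1))) ∧ ∃ i ≤ k, g i = f j := by
  obtain ⟨hT, hMax⟩ := hVstar
  intro v
  constructor
  · intro hv
    have step : ∀ x : {y // y ∈ Vstar}, ∃ w : {y // y ∈ Vstar}, E x.1 w.1 := by
      intro x
      obtain ⟨w, hw, he⟩ := hT x.1 x.2
      exact ⟨⟨w, hw⟩, he⟩
    choose nxt hnxt using step
    let F : ℕ → {y // y ∈ Vstar} := fun n => Nat.rec ⟨v, hv⟩ (fun _ x => nxt x) n
    have hF : ∀ n, E (F n).1 (F (n + 1)).1 := fun n => hnxt (F n)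
    obtain ⟨a, b, hab, heq⟩ := Finite.exists_ne_map_eq_of_infinite (fun n => (F n).1)
    wlog hlt : a < b generalizing a b
    · exact this b a hab.symm heq.symm (by omega)
    refine ⟨a, fun n => (F n).1, rfl, fun i _ => hF i,
      b - a, fun i => (F (a + i)).1, by omega, ?_, fun i _ => hF (a + i), 0, by omega, rfl⟩
    simp only [Nat.add_sub_cancel' hlt.le]
    exact heq
  · rintro ⟨j, f, hf0, hfE, k, g, hk, hgc, hgE, i₀, hi₀, hgf⟩
    set S : Set V := {x | (∃ i ≤ j, f i = x) ∨ ∃ i ≤ k, g i = x} with hS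
    have hgS : ∀ i ≤ k, ∃ w ∈ S, E (g i) w := by
      intro i hi
      rcases eq_or_lt_of_le hi with rfl | hi
      · exact ⟨g 1, Or.inr ⟨1, hk, rfl⟩, by rw [← hgc]; exact hgE 0 hk⟩
      · exact ⟨g (i + 1), Or.inr ⟨i + 1, hi, rfl⟩, hgE i hi⟩
    have hTS : Trimmed E S := by
      rintro x (⟨i, hi, rfl⟩ | ⟨i, hi, rfl⟩)
      · rcases eq_or_lt_of_le hi with rfl | hi
        · rw [← hgf]; exact hgS i₀ hi₀
        · exact ⟨f (i + 1), Or.inl ⟨i + 1, hi, rfl⟩, hfE i hi⟩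
      · exact hgS i hi
    exact hMax S hTS (Or.inl ⟨0, Nat.zero_le j, hf0⟩)
end

section
/- Let G = (V, E) be a finite directed graph and let V* be the maximum subset of V satisfying the trimmed-graph condition. If u, v ∈ V* are mutually reachable in G (there are directed walks from u to v and from v to u in G), then u and v are mutually reachable within the induced subgraph on V*: there are walks from u to v and from v to u all of whose vertices belong to V*. Hence trimming does not break any strongly connected component of size greater than one. -/
/-- There is a walk (possibly of length 0) from `u` to `v` all of whose vertices
belong to `A`. -/
def ReachWithin {V : Type*} (E : V → V → Prop) (A : Set V) (u v : V) : Prop :=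
  ∃ (k : ℕ) (f : ℕ → V), f 0 = u ∧ f k = v ∧
    (∀ i < k, E (f i) (f (i + 1))) ∧ ∀ i ≤ k, f i ∈ A

/-- If `u, v ∈ V*` are mutually reachable in `G`, then they are
mutually reachable within the induced subgraph on `V*`; hence trimming does not
break any strongly connected component of size greater than one. -/
theorem trimming_preserves_scc {V : Type*} [Fintype V] (E : V → V → Prop)
    (Vstar : Set V)
    (hVstar : Trimmed E Vstar ∧ ∀ S, Trimmed E S → S ⊆ Vstar)
    (u v : V) (hu : u ∈ Vstar) (hv : v ∈ Vstar)
    (huv : ReachWithin E Set.univ u v) (hvu : ReachWithin E Set.univ v u) :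
    ReachWithin E Vstar u v ∧ ReachWithin E Vstar v u := by
  obtain ⟨-, hmax⟩ := hVstar
  obtain ⟨k, f, hf0, hfk, hfE, -⟩ := huv
  obtain ⟨l, g, hg0, hgl, hgE, -⟩ := hvu
  rcases Nat.eq_zero_or_pos (k + l) with hm | hm
  · have hk : k = 0 := by omega
    have huveq : u = v := by rw [← hf0, ← hfk, hk]
    subst huveq
    exact ⟨⟨0, fun _ => u, rfl, rfl, by omega, fun i _ => hu⟩,
           ⟨0, fun _ => u, rfl, rfl, fun i hi => by omega, fun i _ => hu⟩⟩
  · set m := k + l with hmdef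
    set h : ℕ → V := fun i => if i ≤ k then f i else g (i - k) with hhdef
    have hfh : ∀ i ≤ k, h i = f i := by intro i hi; simp [hhdef, hi]
    have hfg : ∀ i, k ≤ i → h i = g (i - k) := by
      intro i hi
      rcases eq_or_lt_of_le hi with hik | hik
      · subst hik
        simp [hhdef, hfk, ← hg0]
      · simp [hhdef, Nat.not_le.mpr hik]
    have hh0 : h 0 = u := by rw [hfh 0 (Nat.zero_le _), hf0]
    have hhm : h m = u := by
      rw [hfg m (by omega)]
      have : m - k = l := by omega
      rw [this, hgl]
    have hhE : ∀ i < m, E (h i) (h (i + 1)) := by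
      intro i hi
      by_cases hc : i < k
      · rw [hfh i (le_of_lt hc), hfh (i + 1) hc]
        exact hfE i hc
      · have hc' : k ≤ i := by omega
        rw [hfg i hc', hfg (i + 1) (by omega)]
        have : i + 1 - k = (i - k) + 1 := by omega
        rw [this]
        exact hgE (i - k) (by omega)
    set S : Set V := {x | ∃ i, i < m ∧ h i = x} with hSdef
    have hS : Trimmed E S := by
      rintro x ⟨i, hi, rfl⟩
      by_cases hc : i + 1 < m
      · exact ⟨h (i + 1), ⟨i + 1, hc, rfl⟩, hhE i hi⟩
      · have hieq : i + 1 = m := by omega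
        have e := hhE i hi
        rw [hieq, hhm, ← hh0] at e
        exact ⟨h 0, ⟨0, hm, rfl⟩, e⟩
    have hSsub : S ⊆ Vstar := hmax S hS
    refine ⟨⟨k, f, hf0, hfk, hfE, ?_⟩, ⟨l, g, hg0, hgl, hgE, ?_⟩⟩
    · intro i hi
      rcases eq_or_lt_of_le hi with hik | hik
      · rw [hik, hfk]; exact hv
      · exact hSsub ⟨i, by omega, hfh i hi⟩
    · intro j hj
      rcases eq_or_lt_of_le hj with hjl | hjl
      · rw [hjl, hgl]; exact hu
      · refine hSsub ⟨k + j, by omega, ?_⟩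
        rw [hfg (k + j) (by omega)]
        congr 1
        omega
end
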